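/- arXiv:1509.06364 — 4 statements merged into one kernel-verified Lean document; each statement's English description precedes it below -/
import Mathlib

section
/- The Bose construction yields a commutative loop: let n be odd, S = (ℤ/n × ℤ/3) ∪ {1}, with identity 1 and multiplication defined by (x,i)*(x,j) = (x,k) for {i,j,k} = ℤ/3 distinct, (x,i)*(y,i) = ((x+y)/2, i+1) for x ≠ y, (x,i)*(y,i+1) = (2y−x, i) for x ≠ y, (x,i)*(y,i−1) = (2x−y, i−1) for x ≠ y, and (x,i)*(x,i) = 1. Then (S,*) is a commutative loop. -/
def boseMul (n : ℕ) : Option (ZMod n × ZMod 3) → Option (ZMod n × ZMod 3) → Option (ZMod n × ZMod 3)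
  | none, s => s
  | s, none => s
  | some (x, i), some (y, j) =>
    if x = y then
      if i = j then none else some (x, -i - j)
    else
      if j = i then some ((x + y) * (2 : ZMod n)⁻¹, i + 1)
      else if j = i + 1 then some (2 * y - x, i)
      else some (2 * x - y, j)

abbrev BoseLoop (n : ℕ) : Type := Option (ZMod n × ZMod 3)

instance (n : ℕ) : Mul (BoseLoop n) := ⟨boseMul n⟩
instance (n : ℕ) : One (BoseLoop n) := ⟨none⟩

/-- The candidate inverse of left translation by `some (x, i)`. -/
def boseInv (n : ℕ) (x : ZMod n) (i : ZMod 3) : BoseLoop n → BoseLoop n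
  | none => some (x, i)
  | some (z, k) =>
    if k = i then (if z = x then none else some ((z + x) * (2 : ZMod n)⁻¹, i + 1))
    else if k = i + 1 then (if z = x then some (x, i + 2) else some (2 * z - x, i))
    else (if z = x then some (x, i + 1) else some (2 * x - z, i + 2))

lemma boseZMod3 : ∀ i j : ZMod 3, j = i ∨ j = i + 1 ∨ j = i + 2 := by decide

lemma boseD1 : ∀ i : ZMod 3, i + 1 ≠ i := by decide
lemma boseD2 : ∀ i : ZMod 3, i + 2 ≠ i := by decide
lemma boseD3 : ∀ i : ZMod 3, i + 2 ≠ i + 1 := by decide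
lemma boseD4 : ∀ i : ZMod 3, -i - (i + 1) = i + 2 := by decide
lemma boseD5 : ∀ i : ZMod 3, -i - (i + 2) = i + 1 := by decide
lemma boseD7 : ∀ i : ZMod 3, i = i + 2 + 1 := by decide
lemma boseD8 : ∀ i : ZMod 3, i ≠ i + 1 + 1 := by decide
lemma boseD9 : ∀ i : ZMod 3, i ≠ i + 1 := by decide
lemma boseD10 : ∀ i : ZMod 3, i ≠ i + 2 := by decide

/-- The Bose construction yields a commutative loop. -/
theorem bose_commutative_loop (n : ℕ) (hpos : 0 < n) (hn : Odd n) :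
    (∀ s : BoseLoop n, 1 * s = s) ∧
    (∀ s : BoseLoop n, s * 1 = s) ∧
    (∀ s t : BoseLoop n, s * t = t * s) ∧
    (∀ s : BoseLoop n, Function.Bijective (fun t : BoseLoop n => s * t)) ∧
    (∀ s : BoseLoop n, Function.Bijective (fun t : BoseLoop n => t * s)) := by
  haveI : NeZero n := ⟨hpos.ne'⟩
  have hu : IsUnit (2 : ZMod n) := by
    have := (ZMod.isUnit_iff_coprime 2 n).mpr hn.coprime_two_left
    simpa using this
  have h21 : (2 : ZMod n) * 2⁻¹ = 1 := ZMod.mul_inv_of_unit _ hu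
  have hcanc : ∀ a b : ZMod n, 2 * a = 2 * b → a = b := fun a b h => hu.mul_left_cancel h
  -- arithmetic identities
  have e1 : ∀ a b : ZMod n, 2 * ((a + b) * 2⁻¹) - a = b := fun a b => by
    linear_combination (a + b) * h21
  have e1' : ∀ a b : ZMod n, 2 * ((a + b) * 2⁻¹) - b = a := fun a b => by
    linear_combination (a + b) * h21
  have e2 : ∀ a b : ZMod n, (2 * a - b + b) * 2⁻¹ = a := fun a b => by
    linear_combination a * h21
  have e3 : ∀ a b : ZMod n, 2 * a - (2 * a - b) = b := fun a b => by ring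
  have e4 : ∀ a b : ZMod n, (b + (2 * a - b)) * 2⁻¹ = a := fun a b => by
    linear_combination a * h21
  -- inequalities
  have f1 : ∀ a b : ZMod n, a ≠ b → (a + b) * 2⁻¹ ≠ a := fun a b hab h =>
    hab (by linear_combination -2 * h + (a + b) * h21)
  have f1' : ∀ a b : ZMod n, a ≠ b → (a + b) * 2⁻¹ ≠ b := fun a b hab h =>
    hab (by linear_combination 2 * h - (a + b) * h21)
  have f2 : ∀ a b : ZMod n, a ≠ b → 2 * a - b ≠ b := fun a b hab h =>
    hab (hcanc a b (by linear_combination h))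
  have f3 : ∀ a b : ZMod n, a ≠ b → 2 * a - b ≠ a := fun a b hab h =>
    hab (by linear_combination h)
  have hone_l : ∀ s : BoseLoop n, 1 * s = s := fun s => by cases s <;> rfl
  have hone_r : ∀ s : BoseLoop n, s * 1 = s := fun s => by cases s <;> rfl
  -- commutativity
  have hcomm : ∀ s t : BoseLoop n, s * t = t * s := by
    rintro (_ | ⟨x, i⟩) (_ | ⟨y, j⟩)
    · rfl
    · rfl
    · rfl
    · show boseMul n (some (x, i)) (some (y, j)) = boseMul n (some (y, j)) (some (x, i))
      by_cases hxy : x = y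
      · subst hxy
        by_cases hij : i = j
        · subst hij
          simp [boseMul]
        · simp only [boseMul, if_true, eq_self_iff_true, if_neg hij, if_neg (Ne.symm hij)]
          ring_nf
      · rcases boseZMod3 i j with hj | hj | hj
        · subst hj
          simp only [boseMul, if_true, eq_self_iff_true, if_neg hxy, if_neg (Ne.symm hxy)]
          ring_nf
        · subst hj
          simp only [boseMul, if_true, eq_self_iff_true, if_neg hxy, if_neg (Ne.symm hxy),
            if_neg (boseD1 i), if_neg (boseD9 i), if_neg (boseD8 i)]
        · subst hj
          simp only [boseMul, if_true, eq_self_iff_true, if_neg hxy, if_neg (Ne.symm hxy),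
            if_neg (boseD2 i), if_neg (boseD3 i), if_neg (boseD10 i), if_pos (boseD7 i)]
  -- bijectivity of left translations
  have hleft : ∀ s : BoseLoop n, Function.Bijective (fun t : BoseLoop n => s * t) := by
    rintro (_ | ⟨x, i⟩)
    · have hid : (fun t : BoseLoop n => (none : BoseLoop n) * t) = id := funext fun t => by
        cases t <;> rfl
      rw [hid]
      exact Function.bijective_id
    · apply Function.bijective_iff_has_inverse.mpr
      refine ⟨boseInv n x i, ?_, ?_⟩
      · -- left inverse
        rintro (_ | ⟨y, j⟩)
        · show boseInv n x i (boseMul n (some (x, i)) none) = none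
          simp [boseMul, boseInv]
        · show boseInv n x i (boseMul n (some (x, i)) (some (y, j))) = some (y, j)
          by_cases hxy : x = y
          · subst hxy
            by_cases hij : i = j
            · subst hij
              simp [boseMul, boseInv]
            · rcases boseZMod3 i j with hj | hj | hj
              · exact absurd hj.symm hij
              · subst hj
                simp only [boseMul, boseInv, if_true, eq_self_iff_true, if_neg hij, boseD4,
                  if_neg (boseD2 i), if_neg (boseD3 i)]
              · subst hj
                simp only [boseMul, boseInv, if_true, eq_self_iff_true, if_neg hij, boseD5,
                  if_neg (boseD1 i)]
          · rcases boseZMod3 i j with hj | hj | hj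
            · subst hj
              simp only [boseMul, boseInv, if_true, eq_self_iff_true, if_neg hxy,
                if_neg (boseD1 j), if_neg (f1 x y hxy), e1]
            · subst hj
              simp only [boseMul, boseInv, if_true, eq_self_iff_true, if_neg hxy,
                if_neg (boseD1 i), if_neg (f2 y x (Ne.symm hxy)), e2]
            · subst hj
              simp only [boseMul, boseInv, if_true, eq_self_iff_true, if_neg hxy,
                if_neg (boseD2 i), if_neg (boseD3 i), if_neg (f3 x y hxy), e3]
      · -- right inverse
        rintro (_ | ⟨z, k⟩)
        · show boseMul n (some (x, i)) (boseInv n x i none) = none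
          simp [boseMul, boseInv]
        · show boseMul n (some (x, i)) (boseInv n x i (some (z, k))) = some (z, k)
          rcases boseZMod3 i k with hk | hk | hk
          · subst hk
            by_cases hz : z = x
            · subst hz
              simp [boseMul, boseInv]
            · simp only [boseInv, boseMul, if_true, eq_self_iff_true, if_neg hz,
                if_neg (Ne.symm (f1' z x hz)), if_neg (boseD1 k), e1']
          · subst hk
            by_cases hz : z = x
            · subst hz
              simp only [boseInv, boseMul, if_true, eq_self_iff_true, if_neg (boseD1 i),
                if_neg (boseD2 i), if_neg (boseD3 i), if_neg (boseD10 i), boseD5]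
            · simp only [boseInv, boseMul, if_true, eq_self_iff_true, if_neg hz,
                if_neg (boseD1 i), if_neg (Ne.symm (f2 z x hz)), e4]
          · subst hk
            by_cases hz : z = x
            · subst hz
              simp only [boseInv, boseMul, if_true, eq_self_iff_true, if_neg (boseD2 i),
                if_neg (boseD3 i), if_neg (boseD9 i), boseD4]
            · simp only [boseInv, boseMul, if_true, eq_self_iff_true, if_neg hz,
                if_neg (boseD2 i), if_neg (boseD3 i),
                if_neg (Ne.symm (f3 x z (Ne.symm hz))), e3]
  refine ⟨hone_l, hone_r, hcomm, hleft, fun s => ?_⟩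
  have hswap : (fun t : BoseLoop n => t * s) = (fun t : BoseLoop n => s * t) :=
    funext fun t => hcomm t s
  rw [hswap]
  exact hleft s
end

section
/- The Bose construction loop is a Steiner loop: every element of S satisfies s*s = 1, the operation is commutative, and s*(s*t) = t for all s, t ∈ S. -/
lemma boseMul_some (n : ℕ) (x y : ZMod n) (i j : ZMod 3) :
    (some (x, i) : BoseLoop n) * some (y, j) =
    (if x = y then
      if i = j then none else some (x, -i - j)
    else
      if j = i then some ((x + y) * (2 : ZMod n)⁻¹, i + 1)
      else if j = i + 1 then some (2 * y - x, i)
      else some (2 * x - y, j)) := rfl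

lemma zmod3_neg (i j : ZMod 3) (h : i ≠ j) : i ≠ -i - j := by revert i j; decide

lemma zmod3_third (i j : ZMod 3) (h1 : ¬ j = i) (h2 : ¬ j = i + 1) : j = i + 2 := by
  revert i j; decide

lemma zmod3_succ_ne (i : ZMod 3) : ¬ i + 1 = i := by revert i; decide

lemma zmod3_ne_succ (i : ZMod 3) : ¬ i = i + 1 := by revert i; decide

lemma zmod3_ne_succ_succ (i : ZMod 3) : ¬ i = (i + 1) + 1 := by revert i; decide

lemma zmod3_ne_two (i : ZMod 3) : ¬ i = i + 2 := by revert i; decide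

lemma zmod3_two_eq (i : ZMod 3) : i = (i + 2) + 1 := by revert i; decide

lemma zmod3_neg_sub (i j : ZMod 3) : -i - (-i - j) = j := by ring

/-- The Bose construction loop is a Steiner loop: exponent 2, commutative,
and s*(s*t) = t for all s, t. -/
theorem bose_steiner (n : ℕ) (hpos : 0 < n) (hn : Odd n) :
    (∀ s : BoseLoop n, s * s = 1) ∧
    (∀ s t : BoseLoop n, s * t = t * s) ∧
    (∀ s t : BoseLoop n, s * (s * t) = t) := by
  have h2 : IsUnit (2 : ZMod n) := by
    have h : ((2:ℕ):ZMod n) = (2:ZMod n) := by push_cast; ring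
    rw [← h, ZMod.isUnit_iff_coprime]
    rwa [Nat.coprime_two_left]
  have hmi : (2 : ZMod n) * (2 : ZMod n)⁻¹ = 1 := ZMod.mul_inv_of_unit _ h2
  have hcan : ∀ a b : ZMod n, 2 * a = 2 * b → a = b := fun a b h => by
    have := congrArg (fun z => (2:ZMod n)⁻¹ * z) h
    simpa [← mul_assoc, mul_comm (2:ZMod n)⁻¹ 2, hmi] using this
  have hhalf : ∀ a : ZMod n, 2 * (a * (2:ZMod n)⁻¹) = a := fun a => by
    rw [mul_comm a, ← mul_assoc, hmi, one_mul]
  refine ⟨?_, ?_, ?_⟩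
  · rintro (_ | ⟨x, i⟩)
    · rfl
    · rw [boseMul_some, if_pos rfl, if_pos rfl]
      rfl
  · rintro (_ | ⟨x, i⟩) (_ | ⟨y, j⟩) <;> try rfl
    rw [boseMul_some, boseMul_some]
    by_cases hxy : x = y
    · subst hxy
      rw [if_pos rfl, if_pos rfl]
      by_cases hij : i = j
      · rw [if_pos hij, if_pos hij.symm]
      · rw [if_neg hij, if_neg (Ne.symm hij)]
        congr 2
        ring
    · rw [if_neg hxy, if_neg (Ne.symm hxy)]
      by_cases hji : j = i
      · subst hji
        rw [if_pos rfl, if_pos rfl, add_comm x y]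
      · rw [if_neg hji]
        by_cases hj1 : j = i + 1
        · subst hj1
          rw [if_pos rfl, if_neg (zmod3_ne_succ i), if_neg (zmod3_ne_succ_succ i)]
        · have hj2 : j = i + 2 := zmod3_third i j hji hj1
          subst hj2
          rw [if_neg hj1, if_neg (zmod3_ne_two i), if_pos (zmod3_two_eq i)]
  · rintro (_ | ⟨x, i⟩) (_ | ⟨y, j⟩) <;> try rfl
    · show (some (x, i) : BoseLoop n) * (some (x, i)) = none
      rw [boseMul_some, if_pos rfl, if_pos rfl]
    rw [boseMul_some]
    by_cases hxy : x = y
    · subst hxy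
      by_cases hij : i = j
      · subst hij
        rw [if_pos rfl, if_pos rfl]
        rfl
      · rw [if_pos rfl, if_neg hij, boseMul_some, if_pos rfl,
          if_neg (zmod3_neg i j hij), zmod3_neg_sub i j]
    · rw [if_neg hxy]
      by_cases hji : j = i
      · subst hji
        rw [if_pos rfl, boseMul_some]
        have hx : ¬ x = (x + y) * (2:ZMod n)⁻¹ := by
          intro h
          apply hxy
          have h' : 2 * x = x + y := by
            conv_lhs => rw [h]
            exact hhalf (x + y)
          linear_combination h'
        rw [if_neg hx, if_neg (zmod3_succ_ne j), if_pos rfl, hhalf (x + y)]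
        congr 2
        ring
      · rw [if_neg hji]
        by_cases hj1 : j = i + 1
        · subst hj1
          rw [if_pos rfl, boseMul_some]
          have hx : ¬ x = 2 * y - x := by
            intro h; exact hxy (hcan x y (by linear_combination h))
          rw [if_neg hx, if_pos rfl]
          congr 2
          have h1 : x + (2 * y - x) = 2 * y := by ring
          rw [h1]
          exact hcan _ _ (hhalf (2 * y))
        · rw [if_neg hj1, boseMul_some]
          have hx : ¬ x = 2 * x - y := by
            intro h; exact hxy (by linear_combination -h)
          rw [if_neg hx, if_neg hji, if_neg hj1]
          congr 2
          ring
end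

section
/- In the Bose construction Steiner loop over ℤ/n with n odd, for distinct x, y, z ∈ ℤ/n all in the same ℤ/3-level i, the elements (x,i), (y,i), (z,i) never associate: ((x,i)*(y,i))*(z,i) ≠ (x,i)*((y,i)*(z,i)). -/
/-- In the Bose Steiner loop, three distinct elements on the same level never associate. -/
theorem bose_same_level_never_associate (n : ℕ) (hpos : 0 < n) (hn : Odd n)
    (x y z : ZMod n) (hxy : x ≠ y) (hyz : y ≠ z) (hxz : x ≠ z) (i : ZMod 3) :
    ((some (x, i) : BoseLoop n) * some (y, i)) * some (z, i)
      ≠ some (x, i) * (some (y, i) * some (z, i)) := by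
  haveI : NeZero n := ⟨hpos.ne'⟩
  have h2 : IsUnit (2 : ZMod n) := by
    have hc : Nat.Coprime 2 n := Nat.coprime_two_left.mpr hn
    simpa using (ZMod.isUnit_iff_coprime 2 n).mpr hc
  have hinv : (2 : ZMod n) * (2 : ZMod n)⁻¹ = 1 := ZMod.mul_inv_of_unit _ h2
  have key : ∀ a b : ZMod n, 2 * a = 2 * b → a = b := fun a b h => h2.mul_right_injective h
  have hi1 : i + 1 ≠ i := by revert i; decide
  have hi2 : i ≠ i + 1 + 1 := by revert i; decide
  have hi3 : -(i+1) - i ≠ i := by revert i; decide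
  have hi4 : -i - (i+1) ≠ i := by revert i; decide
  show boseMul n (boseMul n (some (x,i)) (some (y,i))) (some (z,i))
      ≠ boseMul n (some (x,i)) (boseMul n (some (y,i)) (some (z,i)))
  have e1 : boseMul n (some (x,i)) (some (y,i)) = some ((x+y) * (2:ZMod n)⁻¹, i+1) := by
    simp [boseMul, hxy]
  have e2 : boseMul n (some (y,i)) (some (z,i)) = some ((y+z) * (2:ZMod n)⁻¹, i+1) := by
    simp [boseMul, hyz]
  rw [e1, e2]
  by_cases huz : (x+y) * (2:ZMod n)⁻¹ = z <;>
    by_cases hvx : x = (y+z) * (2:ZMod n)⁻¹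
  · -- both degenerate: LHS = some (z, -(i+1)-i), RHS = some (x, -i-(i+1))
    simp only [boseMul, if_pos huz, if_pos hvx, if_neg hi1, if_neg (Ne.symm hi1)]
    intro h
    injection h with h'
    injection h' with h1 h2
    exact hxz (h1.symm.trans huz)
  · simp only [boseMul, if_pos huz, if_neg hvx, if_neg hi1, if_neg (Ne.symm hi1),
      if_neg hi2, if_pos rfl]
    intro h
    injection h with h'
    injection h' with h1 h2
    exact hi3 h2
  · simp only [boseMul, if_neg huz, if_pos hvx, if_neg hi1, if_neg (Ne.symm hi1),
      if_neg hi2, if_pos rfl]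
    intro h
    injection h with h'
    injection h' with h1 h2
    exact hi4 h2.symm
  · simp only [boseMul, if_neg huz, if_neg hvx, if_neg hi1, if_neg (Ne.symm hi1),
      if_neg hi2, if_pos rfl]
    intro h
    injection h with h'
    injection h' with h1 h2
    -- h1 : 2 * ((x+y)*2⁻¹) - z = 2 * ((y+z)*2⁻¹) - x
    apply hxz
    apply key
    have hx2 : 2 * ((x+y) * (2:ZMod n)⁻¹) = x + y := by
      rw [mul_comm ((x+y)) _, ← mul_assoc, hinv, one_mul]
    have hy2 : 2 * ((y+z) * (2:ZMod n)⁻¹) = y + z := by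
      rw [mul_comm ((y+z)) _, ← mul_assoc, hinv, one_mul]
    rw [hx2, hy2] at h1
    linear_combination h1
end

section
/- The Bose construction over ℤ/n (n odd) yields a Steiner triple system on 3n points: the triples {(x,0),(x,1),(x,2)} for x ∈ ℤ/n together with {(x,i),(y,i),((x+y)/2, i+1)} for x ≠ y in ℤ/n and i ∈ ℤ/3 form a family in which every pair of distinct points of ℤ/n × ℤ/3 lies in exactly one triple. -/
private lemma bose_key (n : ℕ) (h2 : (2:ZMod n) * (2:ZMod n)⁻¹ = 1)
    (a b : ZMod n) (i : ZMod 3) (hab : a ≠ b) :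
    ∃! T, T ∈ ({T | (∃ x : ZMod n, T = {(x, 0), (x, 1), (x, 2)}) ∨
                 (∃ x y : ZMod n, ∃ i : ZMod 3, x ≠ y ∧
                    T = {(x, i), (y, i), ((x + y) * (2 : ZMod n)⁻¹, i + 1)})} :
             Set (Finset (ZMod n × ZMod 3))) ∧ (a, i) ∈ T ∧ (b, i+1) ∈ T := by
  have hdiv : ∀ u v : ZMod n, u * (2:ZMod n)⁻¹ = v ↔ u = 2 * v := by
    intro u v
    constructor
    · intro h; linear_combination 2*h - u*h2
    · intro h; subst h; rw [mul_comm 2 v, mul_assoc, h2, mul_one]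
  have hcan : ∀ u v : ZMod n, 2*u = 2*v → u = v := by
    intro u v h
    linear_combination (2:ZMod n)⁻¹ * h + (v - u) * h2
  have hne : a ≠ 2*b - a := fun h => hab (hcan a b (by linear_combination h))
  have hsum : (a + (2*b - a)) * (2:ZMod n)⁻¹ = b := (hdiv _ _).mpr (by ring)
  have h31 : ∀ k : ZMod 3, k + 1 ≠ k := by decide
  have h31' : ∀ k : ZMod 3, k ≠ k + 1 := by decide
  have h32 : ∀ k : ZMod 3, k + 1 + 1 ≠ k := by decide
  have h32' : ∀ k : ZMod 3, k ≠ k + 1 + 1 := by decide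
  refine ⟨{(a, i), (2*b - a, i), (b, i+1)}, ⟨Or.inr ⟨a, 2*b - a, i, hne, by rw [hsum]⟩,
    by simp, by simp⟩, ?_⟩
  rintro T ⟨hT | hT, hp, hq⟩
  · obtain ⟨x, rfl⟩ := hT
    simp only [Finset.mem_insert, Finset.mem_singleton, Prod.mk.injEq] at hp hq
    have hax : a = x := by tauto
    have hbx : b = x := by tauto
    exact absurd (hax.trans hbx.symm) hab
  · obtain ⟨x, y, k, hxy, rfl⟩ := hT
    simp only [Finset.mem_insert, Finset.mem_singleton, Prod.mk.injEq] at hp hq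
    rcases hp with ⟨rfl, rfl⟩ | ⟨rfl, rfl⟩ | ⟨hp1, hp2⟩
    · -- a = x, i = k
      rcases hq with ⟨rfl, hq2⟩ | ⟨rfl, hq2⟩ | ⟨hq1, hq2⟩
      · exact absurd hq2 (h31 i)
      · exact absurd hq2 (h31 i)
      · have h' : a + y = 2 * b := (hdiv _ _).mp hq1.symm
        have hy : y = 2*b - a := by linear_combination h'
        subst hy
        rw [hsum]
    · -- a = y, i = k
      rcases hq with ⟨rfl, hq2⟩ | ⟨rfl, hq2⟩ | ⟨hq1, hq2⟩
      · exact absurd hq2 (h31 i)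
      · exact absurd hq2 (h31 i)
      · have h' : x + a = 2 * b := (hdiv _ _).mp hq1.symm
        have hx : x = 2*b - a := by linear_combination h'
        subst hx
        rw [add_comm (2*b-a) a, hsum, Finset.insert_comm]
    · -- i = k + 1
      subst hp2
      rcases hq with ⟨hq1, hq2⟩ | ⟨hq1, hq2⟩ | ⟨hq1, hq2⟩
      · exact absurd hq2 (h32 k)
      · exact absurd hq2 (h32 k)
      · exact absurd (hp1.trans hq1.symm) hab

/-- The Bose construction over ZMod n (n odd) yields a Steiner triple system on
3n points: every block has 3 elements and every pair of distinct points lies in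
exactly one block. -/
theorem bose_is_steiner_triple_system (n : ℕ) (hpos : 0 < n) (hn : Odd n) :
    Nat.card (ZMod n × ZMod 3) = 3 * n ∧
    (∀ T ∈ ({T | (∃ x : ZMod n, T = {(x, 0), (x, 1), (x, 2)}) ∨
                 (∃ x y : ZMod n, ∃ i : ZMod 3, x ≠ y ∧
                    T = {(x, i), (y, i), ((x + y) * (2 : ZMod n)⁻¹, i + 1)})} :
             Set (Finset (ZMod n × ZMod 3))), T.card = 3) ∧
    (∀ p q : ZMod n × ZMod 3, p ≠ q →
      ∃! T, T ∈ ({T | (∃ x : ZMod n, T = {(x, 0), (x, 1), (x, 2)}) ∨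
                      (∃ x y : ZMod n, ∃ i : ZMod 3, x ≠ y ∧
                         T = {(x, i), (y, i), ((x + y) * (2 : ZMod n)⁻¹, i + 1)})} :
                  Set (Finset (ZMod n × ZMod 3))) ∧ p ∈ T ∧ q ∈ T) := by
  haveI : NeZero n := ⟨hpos.ne'⟩
  have hu : IsUnit (2 : ZMod n) := by
    have : ((2:ℕ) : ZMod n) = (2 : ZMod n) := by norm_cast
    rw [← this, ZMod.isUnit_iff_coprime]
    exact (Nat.Prime.coprime_iff_not_dvd Nat.prime_two).mpr
      (by simpa [Nat.odd_iff, Nat.two_dvd_ne_zero] using hn)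
  have h2 : (2 : ZMod n) * (2:ZMod n)⁻¹ = 1 := ZMod.mul_inv_of_unit _ hu
  have hdiv : ∀ u v : ZMod n, u * (2:ZMod n)⁻¹ = v ↔ u = 2 * v := by
    intro u v
    constructor
    · intro h; linear_combination 2*h - u*h2
    · intro h; subst h; rw [mul_comm 2 v, mul_assoc, h2, mul_one]
  have h30 : ∀ k : ZMod 3, k = 0 ∨ k = 1 ∨ k = 2 := by decide
  have h31 : ∀ k : ZMod 3, k + 1 ≠ k := by decide
  have h31' : ∀ k : ZMod 3, k ≠ k + 1 := by decide
  have h3cases : ∀ k l : ZMod 3, k ≠ l → l = k + 1 ∨ k = l + 1 := by decide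
  refine ⟨by simp [Nat.card_prod, Nat.card_zmod, mul_comm], ?_, ?_⟩
  · rintro T (⟨x, rfl⟩ | ⟨x, y, i, hxy, rfl⟩)
    · rw [Finset.card_insert_of_notMem (by simp; decide),
        Finset.card_insert_of_notMem (by simp; decide), Finset.card_singleton]
    · rw [Finset.card_insert_of_notMem, Finset.card_insert_of_notMem (by simp [h31 i]),
        Finset.card_singleton]
      simp [hxy, (h31 i).symm, h31' i]
  · rintro ⟨a, i⟩ ⟨b, j⟩ hpq
    by_cases hab : a = b
    · subst hab
      have hij : i ≠ j := fun h => hpq (by rw [h])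
      refine ⟨{(a, 0), (a, 1), (a, 2)}, ⟨Or.inl ⟨a, rfl⟩, ?_, ?_⟩, ?_⟩
      · rcases h30 i with h | h | h <;> subst h <;> simp
      · rcases h30 j with h | h | h <;> subst h <;> simp
      · rintro T ⟨hT | hT, hp, hq⟩
        · obtain ⟨x, rfl⟩ := hT
          simp only [Finset.mem_insert, Finset.mem_singleton, Prod.mk.injEq] at hp
          have : a = x := by tauto
          subst this
          rfl
        · obtain ⟨x, y, k, hxy, rfl⟩ := hT
          exfalso
          simp only [Finset.mem_insert, Finset.mem_singleton, Prod.mk.injEq] at hp hq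
          rcases hp with ⟨rfl, rfl⟩ | ⟨rfl, rfl⟩ | ⟨hp1, hp2⟩
          · rcases hq with ⟨hq1, hq2⟩ | ⟨hq1, hq2⟩ | ⟨hq1, hq2⟩
            · exact hij hq2.symm
            · exact hij hq2.symm
            · have h' : a + y = 2 * a := (hdiv _ _).mp hq1.symm
              exact hxy (by linear_combination -h')
          · rcases hq with ⟨hq1, hq2⟩ | ⟨hq1, hq2⟩ | ⟨hq1, hq2⟩
            · exact hij hq2.symm
            · exact hij hq2.symm
            · have h' : x + a = 2 * a := (hdiv _ _).mp hq1.symm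
              exact hxy (by linear_combination h')
          · rcases hq with ⟨rfl, hq2⟩ | ⟨rfl, hq2⟩ | ⟨hq1, hq2⟩
            · have h' : a + y = 2 * a := (hdiv _ _).mp hp1.symm
              exact hxy (by linear_combination -h')
            · have h' : x + a = 2 * a := (hdiv _ _).mp hp1.symm
              exact hxy (by linear_combination h')
            · exact hij (hp2.trans hq2.symm)
    · by_cases hij : i = j
      · subst hij
        refine ⟨{(a, i), (b, i), ((a+b) * (2:ZMod n)⁻¹, i+1)}, ⟨Or.inr ⟨a, b, i, hab, rfl⟩,
          by simp, by simp⟩, ?_⟩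
        rintro T ⟨hT | hT, hp, hq⟩
        · obtain ⟨x, rfl⟩ := hT
          simp only [Finset.mem_insert, Finset.mem_singleton, Prod.mk.injEq] at hp hq
          have hax : a = x := by tauto
          have hbx : b = x := by tauto
          exact absurd (hax.trans hbx.symm) hab
        · obtain ⟨x, y, k, hxy, rfl⟩ := hT
          simp only [Finset.mem_insert, Finset.mem_singleton, Prod.mk.injEq] at hp hq
          rcases hp with ⟨rfl, rfl⟩ | ⟨rfl, rfl⟩ | ⟨hp1, hp2⟩
          · rcases hq with ⟨rfl, hq2⟩ | ⟨rfl, hq2⟩ | ⟨hq1, hq2⟩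
            · exact absurd rfl hab
            · rfl
            · exact absurd hq2 (h31' i)
          · rcases hq with ⟨rfl, hq2⟩ | ⟨rfl, hq2⟩ | ⟨hq1, hq2⟩
            · rw [add_comm, Finset.insert_comm]
            · exact absurd rfl hab
            · exact absurd hq2 (h31' i)
          · rcases hq with ⟨hq1, hq2⟩ | ⟨hq1, hq2⟩ | ⟨hq1, hq2⟩
            · exact absurd (hq2.symm.trans hp2) (h31' k)
            · exact absurd (hq2.symm.trans hp2) (h31' k)
            · exact absurd (hp1.trans hq1.symm) hab
      · rcases h3cases i j hij with h | h
        · subst h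
          exact bose_key n h2 a b i hab
        · subst h
          obtain ⟨T, ⟨hS, hm1, hm2⟩, hu'⟩ := bose_key n h2 b a j (Ne.symm hab)
          exact ⟨T, ⟨hS, hm2, hm1⟩, fun T' ⟨hS', hm1', hm2'⟩ => hu' T' ⟨hS', hm2', hm1'⟩⟩
end
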